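/- arXiv:1503.04826 — 3 statements merged into one kernel-verified Lean document; each statement's English description precedes it below -/
import Mathlib

section
/- Fix d ≥ 3 and exponents 2−d ≤ p < 0 < q ≤ 2, and let ψ_ε be the heat kernel. Define the regularized repulsive energy E^r_ε(μ) = ∬_{ℝ^d×ℝ^d} (ψ_ε * K^r * ψ_ε)(x−y) dμ(x) dμ(y), where K^r(x) = −|x|^p/p. Then for all 0 < ε₂ ≤ ε₁ and all μ ∈ P_2(ℝ^d), E^r_{ε₁}(μ) ≤ E^r_{ε₂}(μ). -/
open MeasureTheory Filter
open scoped ENNReal Topology NNReal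

noncomputable section

/-- Power-law interaction kernel `K(x) = |x|^q/q - |x|^p/p` (real-valued). -/
noncomputable def Kfun (d : ℕ) (p q : ℝ) (x : EuclideanSpace ℝ (Fin d)) : ℝ :=
  ‖x‖ ^ q / q - ‖x‖ ^ p / p

/-- Power-law interaction kernel, valued in `[0,∞]` (note `K 0 = ∞` when `p < 0 < q`). -/
noncomputable def KE (d : ℕ) (p q : ℝ) (x : EuclideanSpace ℝ (Fin d)) : ℝ≥0∞ :=
  (‖x‖₊ : ℝ≥0∞) ^ q / ENNReal.ofReal q + (‖x‖₊ : ℝ≥0∞) ^ p / ENNReal.ofReal (-p)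

/-- Repulsive part `K^r(x) = -|x|^p/p` of the power-law kernel, valued in `[0,∞]`. -/
noncomputable def KrE (d : ℕ) (p : ℝ) (x : EuclideanSpace ℝ (Fin d)) : ℝ≥0∞ :=
  (‖x‖₊ : ℝ≥0∞) ^ p / ENNReal.ofReal (-p)

/-- Rescaled mollifier `φ_ε(x) = ε^{-d} φ(x/ε)`. -/
noncomputable def scaled (d : ℕ) (φ : EuclideanSpace ℝ (Fin d) → ℝ) (ε : ℝ)
    (x : EuclideanSpace ℝ (Fin d)) : ℝ :=
  (ε ^ d)⁻¹ * φ (ε⁻¹ • x)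

/-- Mollifier hypotheses (M1)–(M3). -/
def IsMollifier (d : ℕ) (φ : EuclideanSpace ℝ (Fin d) → ℝ) : Prop :=
  ContDiff ℝ (⊤ : ℕ∞) φ ∧ (∀ x y, ‖x‖ = ‖y‖ → φ x = φ y) ∧ (∀ x, 0 ≤ φ x) ∧
    (∫ x, φ x) = 1 ∧
    ∃ C : ℝ, 0 < C ∧ ∃ l : ℝ, max (2 * (d : ℝ) + 1) 4 ≤ l ∧
      ∀ x : EuclideanSpace ℝ (Fin d), x ≠ 0 → φ x ≤ C * ‖x‖ ^ (-l)

/-- Regularized kernel `K_ε = φ_ε * K * φ_ε` (real-valued). -/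
noncomputable def Kreg (d : ℕ) (p q : ℝ) (φ : EuclideanSpace ℝ (Fin d) → ℝ) (ε : ℝ)
    (x : EuclideanSpace ℝ (Fin d)) : ℝ :=
  ∫ y, ∫ z, scaled d φ ε y * Kfun d p q (x - y - z) * scaled d φ ε z

/-- Double mollification `g * K * g` of a `[0,∞]`-valued kernel by a nonnegative function. -/
noncomputable def convE (d : ℕ) (g : EuclideanSpace ℝ (Fin d) → ℝ)
    (K : EuclideanSpace ℝ (Fin d) → ℝ≥0∞) (x : EuclideanSpace ℝ (Fin d)) : ℝ≥0∞ :=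
  ∫⁻ y, ∫⁻ z, ENNReal.ofReal (g y) * K (x - y - z) * ENNReal.ofReal (g z)

/-- Interaction energy `E(μ) = ∬ K(x-y) dμ(x) dμ(y)` for a `[0,∞]`-valued kernel. -/
noncomputable def energyE (d : ℕ) (K : EuclideanSpace ℝ (Fin d) → ℝ≥0∞)
    (μ : Measure (EuclideanSpace ℝ (Fin d))) : ℝ≥0∞ :=
  ∫⁻ x, ∫⁻ y, K (x - y) ∂μ ∂μ

/-- Regularized interaction energy `E_ε(μ) = ∬ K_ε(x-y) dμ(x) dμ(y)`. -/
noncomputable def energyReg (d : ℕ) (p q : ℝ) (φ : EuclideanSpace ℝ (Fin d) → ℝ) (ε : ℝ)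
    (μ : Measure (EuclideanSpace ℝ (Fin d))) : ℝ≥0∞ :=
  energyE d (fun x => ENNReal.ofReal (Kreg d p q φ ε x)) μ

/-- Real-valued interaction energy. -/
noncomputable def energyReal (d : ℕ) (p q : ℝ) (μ : Measure (EuclideanSpace ℝ (Fin d))) : ℝ :=
  ∫ x, ∫ y, Kfun d p q (x - y) ∂μ ∂μ

/-- Borel probability measure with finite second moment. -/
def IsP2 (d : ℕ) (μ : Measure (EuclideanSpace ℝ (Fin d))) : Prop :=
  IsProbabilityMeasure μ ∧ (∫⁻ x, (‖x‖₊ : ℝ≥0∞) ^ 2 ∂μ) < ⊤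

/-- The heat kernel `ψ_ε(x) = (4πε)^{-d/2} e^{-|x|²/(4ε)}`. -/
noncomputable def heat (d : ℕ) (ε : ℝ) (x : EuclideanSpace ℝ (Fin d)) : ℝ :=
  (4 * Real.pi * ε) ^ (-(d : ℝ) / 2) * Real.exp (-‖x‖ ^ 2 / (4 * ε))

/-- Weak-* convergence of a sequence of measures: convergence of integrals of all bounded
continuous functions. -/
def WeakStarTendsto (d : ℕ) (μ : ℕ → Measure (EuclideanSpace ℝ (Fin d)))
    (ν : Measure (EuclideanSpace ℝ (Fin d))) : Prop :=
  ∀ f : EuclideanSpace ℝ (Fin d) → ℝ, Continuous f → (∃ M : ℝ, ∀ x, |f x| ≤ M) →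
    Tendsto (fun k => ∫ x, f x ∂(μ k)) atTop (𝓝 (∫ x, f x ∂ν))

/-- `μ` is absolutely continuous (w.r.t. Lebesgue) with density bounded by `R`. -/
def HasBddDensity (d : ℕ) (μ : Measure (EuclideanSpace ℝ (Fin d))) (R : ℝ) : Prop :=
  ∃ ρ : EuclideanSpace ℝ (Fin d) → ℝ≥0∞, Measurable ρ ∧ μ = volume.withDensity ρ ∧
    ∀ᵐ x ∂(volume : Measure (EuclideanSpace ℝ (Fin d))), ρ x ≤ ENNReal.ofReal R

/-- Explicit gradient `∇K(x) = x|x|^{q-2} - x|x|^{p-2}` of the power-law kernel. -/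
noncomputable def gradK (d : ℕ) (p q : ℝ) (x : EuclideanSpace ℝ (Fin d)) :
    EuclideanSpace ℝ (Fin d) :=
  (‖x‖ ^ (q - 2)) • x - (‖x‖ ^ (p - 2)) • x

/-- The log-Lipschitz modulus of convexity `ω`. -/
noncomputable def omegaMod (x : ℝ) : ℝ :=
  if x ≤ Real.exp (-1 - Real.sqrt 2) then x * |Real.log x|
  else Real.sqrt (x ^ 2 + 2 * (1 + Real.sqrt 2) * Real.exp (-1 - Real.sqrt 2) * x)

/-- Support of a measure: points all of whose neighborhoods have positive measure. -/
def msupport (d : ℕ) (μ : Measure (EuclideanSpace ℝ (Fin d))) :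
    Set (EuclideanSpace ℝ (Fin d)) :=
  {x | ∀ r : ℝ, 0 < r → 0 < μ (Metric.ball x r)}

/-- The measure `μ * ψ_δ` obtained by mollifying `μ` with the heat kernel at scale `δ`. -/
noncomputable def heatMollified (d : ℕ) (μ : Measure (EuclideanSpace ℝ (Fin d))) (δ : ℝ) :
    Measure (EuclideanSpace ℝ (Fin d)) :=
  volume.withDensity fun x => ENNReal.ofReal (∫ y, heat d δ (x - y) ∂μ)

/-
Bochner subordination writes the repulsive kernel as a superposition of heat kernels:
for `w ≠ 0`, `|w|^p / (-p) = C ∫_0^∞ s^((p+d)/2 - 1) ψ_s(w) ds`. Since `ψ_ε * ψ_s = ψ_(s+ε)`,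
mollifying twice at scale `ε` replaces every `ψ_s` by `ψ_(s+2ε)`; after the substitution
`r = s + 2ε` the weight is `(r - 2ε)^((p+d)/2 - 1)` on `r > 2ε`, which decreases in `ε`
because `p ≥ 2 - d`. So the regularized kernels, and hence the energies, decrease in `ε`.
-/

open Set Real

section HeatKernel

variable {d : ℕ}

theorem heat_nonneg {σ : ℝ} (hσ : 0 ≤ σ) (z : EuclideanSpace ℝ (Fin d)) : 0 ≤ heat d σ z := by
  unfold heat; positivity

theorem integral_heat {σ : ℝ} (hσ : 0 < σ) : ∫ z : EuclideanSpace ℝ (Fin d), heat d σ z = 1 := by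
  have hb : 0 < (4 * σ)⁻¹ := by positivity
  have hgauss := GaussianFourier.integral_rexp_neg_mul_sq_norm (V := EuclideanSpace ℝ (Fin d)) hb
  rw [finrank_euclideanSpace_fin] at hgauss
  simp only [heat, neg_div, div_eq_inv_mul (‖_‖ ^ 2), ← neg_mul]
  rw [integral_const_mul, hgauss, div_inv_eq_mul, Real.rpow_neg (by positivity),
    show π * (4 * σ) = 4 * π * σ by ring, inv_mul_cancel₀ (by positivity)]

theorem lintegral_heat_sub {σ : ℝ} (hσ : 0 < σ) (c : EuclideanSpace ℝ (Fin d)) :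
    ∫⁻ z, ENNReal.ofReal (heat d σ (z - c)) = 1 := by
  have hint : Integrable (heat d σ) :=
    Integrable.of_integral_ne_zero (by rw [integral_heat hσ]; exact one_ne_zero)
  rw [lintegral_sub_right_eq_self (fun z => ENNReal.ofReal (heat d σ z)) c,
    ← ofReal_integral_eq_lintegral_ofReal hint (ae_of_all _ (heat_nonneg hσ.le)),
    integral_heat hσ, ENNReal.ofReal_one]

theorem heat_mul_heat_sub {ε τ : ℝ} (hε : 0 < ε) (hτ : 0 < τ) (w z : EuclideanSpace ℝ (Fin d)) :
    heat d ε z * heat d τ (w - z)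
      = heat d (ε + τ) w * heat d (ε * τ / (ε + τ)) (z - (ε / (ε + τ)) • w) := by
  have hprefactor : (4 * π * ε) ^ (-(d : ℝ) / 2) * (4 * π * τ) ^ (-(d : ℝ) / 2)
      = (4 * π * (ε + τ)) ^ (-(d : ℝ) / 2) * (4 * π * (ε * τ / (ε + τ))) ^ (-(d : ℝ) / 2) := by
    rw [← Real.mul_rpow (by positivity) (by positivity),
      ← Real.mul_rpow (by positivity) (by positivity)]
    congr 1
    field_simp
  have hexponent : -‖z‖ ^ 2 / (4 * ε) + -‖w - z‖ ^ 2 / (4 * τ)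
      = -‖w‖ ^ 2 / (4 * (ε + τ)) + -‖z - (ε / (ε + τ)) • w‖ ^ 2 / (4 * (ε * τ / (ε + τ))) := by
    rw [norm_sub_sq_real, norm_sub_sq_real, norm_smul, real_inner_smul_right,
      Real.norm_of_nonneg (by positivity), real_inner_comm]
    field_simp
    ring
  simp only [heat]
  calc _ = ((4 * π * ε) ^ (-(d : ℝ) / 2) * (4 * π * τ) ^ (-(d : ℝ) / 2)) *
        Real.exp (-‖z‖ ^ 2 / (4 * ε) + -‖w - z‖ ^ 2 / (4 * τ)) := by rw [Real.exp_add]; ring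
    _ = _ := by rw [hprefactor, hexponent, Real.exp_add]; ring

theorem lintegral_heat_mul_heat_sub {ε τ : ℝ} (hε : 0 < ε) (hτ : 0 < τ)
    (w : EuclideanSpace ℝ (Fin d)) :
    ∫⁻ z, ENNReal.ofReal (heat d ε z) * ENNReal.ofReal (heat d τ (w - z))
      = ENNReal.ofReal (heat d (ε + τ) w) := by
  have hετ : 0 < ε + τ := by linarith
  calc _ = ∫⁻ z, ENNReal.ofReal (heat d (ε + τ) w) *
        ENNReal.ofReal (heat d (ε * τ / (ε + τ)) (z - (ε / (ε + τ)) • w)) := by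
        refine lintegral_congr fun z => ?_
        rw [← ENNReal.ofReal_mul (heat_nonneg hε.le _), heat_mul_heat_sub hε hτ,
          ENNReal.ofReal_mul (heat_nonneg hετ.le _)]
    _ = _ := by
        rw [lintegral_const_mul' _ _ ENNReal.ofReal_ne_top, lintegral_heat_sub (by positivity),
          mul_one]

end HeatKernel

def heatMixture (d : ℕ) (g : ℝ → ℝ≥0∞) (t : ℝ) (w : EuclideanSpace ℝ (Fin d)) : ℝ≥0∞ :=
  ∫⁻ s in Ioi 0, g s * ENNReal.ofReal (heat d (s + t) w)

section HeatMixture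

variable {d : ℕ}

@[fun_prop]
theorem measurable_heatMixture {g : ℝ → ℝ≥0∞} (hg : Measurable g) (t : ℝ) :
    Measurable (heatMixture d g t) :=
  Measurable.lintegral_prod_right' (f := fun q : EuclideanSpace ℝ (Fin d) × ℝ =>
    g q.2 * ENNReal.ofReal (heat d (q.2 + t) q.1)) (by unfold heat; fun_prop)

theorem lintegral_heat_mul_heatMixture_sub {g : ℝ → ℝ≥0∞} (hg : Measurable g) {ε t : ℝ}
    (hε : 0 < ε) (ht : 0 ≤ t) (w : EuclideanSpace ℝ (Fin d)) :
    ∫⁻ z, ENNReal.ofReal (heat d ε z) * heatMixture d g t (w - z) = heatMixture d g (t + ε) w := by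
  simp only [heatMixture, ← lintegral_const_mul' _ _ ENNReal.ofReal_ne_top]
  rw [lintegral_lintegral_swap (by unfold heat; fun_prop)]
  refine setLIntegral_congr_fun measurableSet_Ioi fun s (hs : 0 < s) => ?_
  simp_rw [mul_left_comm (ENNReal.ofReal _) (g s)]
  rw [lintegral_const_mul _ (by unfold heat; fun_prop),
    lintegral_heat_mul_heat_sub hε (by linarith), show ε + (s + t) = s + (t + ε) by ring]

theorem lintegral_Ioi_comp_add_right (f : ℝ → ℝ≥0∞) (δ : ℝ) :
    ∫⁻ s in Ioi 0, f (s + δ) = ∫⁻ r in Ioi δ, f r := by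
  have hpre : (fun s : ℝ => s + δ) ⁻¹' Ioi δ = Ioi 0 := by ext; simp
  rw [← hpre, (measurePreserving_add_right volume δ).setLIntegral_comp_preimage_emb
    (Homeomorph.addRight δ).measurableEmbedding]

theorem heatMixture_antitone {g : ℝ → ℝ≥0∞} (hg : MonotoneOn g (Ioi 0))
    (w : EuclideanSpace ℝ (Fin d)) : Antitone fun t => heatMixture d g t w := by
  intro t' t htt'
  have hδ : 0 ≤ t - t' := by linarith
  calc heatMixture d g t w
      ≤ ∫⁻ s in Ioi 0, g (s + (t - t')) * ENNReal.ofReal (heat d (s + (t - t') + t') w) := by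
        refine setLIntegral_mono' measurableSet_Ioi fun s (hs : 0 < s) => ?_
        rw [show s + (t - t') + t' = s + t by ring]
        gcongr
        exact hg hs (show 0 < s + (t - t') by linarith) (by linarith)
    _ = ∫⁻ r in Ioi (t - t'), g r * ENNReal.ofReal (heat d (r + t') w) :=
        lintegral_Ioi_comp_add_right (fun r => g r * ENNReal.ofReal (heat d (r + t') w)) _
    _ ≤ heatMixture d g t' w := lintegral_mono_set (Ioi_subset_Ioi hδ)

end HeatMixture

theorem lintegral_rpow_neg_sub_one_mul_exp_neg_div {a r : ℝ} (ha : 0 < a) (hr : 0 < r) :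
    ∫⁻ s in Ioi 0, ENNReal.ofReal (s ^ (-a - 1) * Real.exp (-(r / s)))
      = ENNReal.ofReal (r ^ (-a) * Gamma a) := by
  set f : ℝ → ℝ := fun s => s ^ (-a - 1) * Real.exp (-(r / s))
  -- the substitution `s = x⁻¹` turns this into the Gamma integral
  have hinv : EqOn (fun x : ℝ => (|(-1 : ℝ)| * x ^ ((-1 : ℝ) - 1)) • f (x ^ (-1 : ℝ)))
      (fun x => x ^ (a - 1) * Real.exp (-(r * x))) (Ioi 0) := fun x (hx : 0 < x) => by
    simp only [f, smul_eq_mul, abs_neg, abs_one, one_mul, Real.rpow_neg_one,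
      Real.inv_rpow hx.le, ← Real.rpow_neg hx.le, div_inv_eq_mul, ← mul_assoc,
      ← Real.rpow_add hx]
    ring_nf
  have hint : IntegrableOn f (Ioi 0) := by
    refine (integrableOn_Ioi_comp_rpow_iff f (by norm_num : (-1 : ℝ) ≠ 0)).mp ?_
    refine (integrableOn_rpow_mul_exp_neg_mul_rpow (s := a - 1) (by linarith) one_pos
      hr).congr_fun (fun x hx => ?_) measurableSet_Ioi
    simpa only [Real.rpow_one, neg_mul] using (hinv hx).symm
  rw [← ofReal_integral_eq_lintegral_ofReal hint
      ((ae_restrict_iff' measurableSet_Ioi).mpr (ae_of_all _ fun s (hs : 0 < s) => by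
        simp only [Pi.zero_apply, f]; positivity)),
    ← integral_comp_rpow_Ioi f (by norm_num : (-1 : ℝ) ≠ 0),
    setIntegral_congr_fun measurableSet_Ioi hinv, integral_rpow_mul_exp_neg_mul_Ioi ha hr,
    one_div, Real.inv_rpow hr.le, ← Real.rpow_neg hr.le]

section Repulsive

variable {d : ℕ}

theorem KrE_eq_ofReal {p : ℝ} (hp : p < 0) {w : EuclideanSpace ℝ (Fin d)} (hw : w ≠ 0) :
    KrE d p w = ENNReal.ofReal (‖w‖ ^ p / -p) := by
  rw [KrE, ENNReal.ofReal_div_of_pos (by linarith),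
    ← ENNReal.ofReal_rpow_of_pos (norm_pos_iff.mpr hw), ofReal_norm, enorm_eq_nnnorm]

theorem heatMixture_rpow_eq {p : ℝ} (hp : p < 0) {w : EuclideanSpace ℝ (Fin d)} (hw : w ≠ 0) :
    heatMixture d (fun s => ENNReal.ofReal (s ^ ((p + d) / 2 - 1))) 0 w
      = ENNReal.ofReal ((4 * π) ^ (-(d : ℝ) / 2) * Gamma (-p / 2) * (‖w‖ / 2) ^ p) := by
  calc heatMixture d _ 0 w
      = ∫⁻ s in Ioi 0, ENNReal.ofReal ((4 * π) ^ (-(d : ℝ) / 2)) *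
          ENNReal.ofReal (s ^ (-(-p / 2) - 1) * Real.exp (-((‖w‖ ^ 2 / 4) / s))) := by
        refine setLIntegral_congr_fun measurableSet_Ioi fun s (hs : 0 < s) => ?_
        rw [← ENNReal.ofReal_mul (by positivity), ← ENNReal.ofReal_mul (by positivity), add_zero]
        congr 1
        have hpow : s ^ ((p + d) / 2 - 1) * s ^ (-(d : ℝ) / 2) = s ^ (-(-p / 2) - 1) := by
          rw [← Real.rpow_add hs]; ring_nf
        simp only [heat]
        rw [Real.mul_rpow (by positivity) hs.le, show -‖w‖ ^ 2 / (4 * s) = -((‖w‖ ^ 2 / 4) / s)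
          by ring]
        linear_combination (4 * π) ^ (-(d : ℝ) / 2) * Real.exp (-((‖w‖ ^ 2 / 4) / s)) * hpow
    _ = _ := by
        rw [lintegral_const_mul' _ _ ENNReal.ofReal_ne_top,
          lintegral_rpow_neg_sub_one_mul_exp_neg_div (by linarith) (by positivity),
          ← ENNReal.ofReal_mul (by positivity), show ‖w‖ ^ 2 / 4 = (‖w‖ / 2) ^ 2 by ring,
          ← Real.rpow_natCast, ← Real.rpow_mul (by positivity)]
        congr 1
        ring_nf

theorem exists_KrE_eq_mul_heatMixture {p : ℝ} (hp : p < 0) :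
    ∃ C : ℝ≥0∞, ∀ w : EuclideanSpace ℝ (Fin d), w ≠ 0 →
      KrE d p w = C * heatMixture d (fun s => ENNReal.ofReal (s ^ ((p + d) / 2 - 1))) 0 w := by
  have hΓ : Gamma (-(p / 2)) ≠ 0 := (Real.Gamma_pos_of_pos (by linarith)).ne'
  refine ⟨ENNReal.ofReal (2 ^ p / (-p * ((4 * π) ^ (-(d : ℝ) / 2) * Gamma (-p / 2)))),
    fun w hw => ?_⟩
  have hp' : 0 < -p := by linarith
  rw [KrE_eq_ofReal hp hw, heatMixture_rpow_eq hp hw, ← ENNReal.ofReal_mul (by positivity),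
    Real.div_rpow (norm_nonneg _) zero_le_two]
  congr 1
  field_simp

theorem convE_heat_eq_mul_heatMixture (hd : 0 < d) {g : ℝ → ℝ≥0∞} (hg : Measurable g) {ε : ℝ}
    (hε : 0 < ε) {K : EuclideanSpace ℝ (Fin d) → ℝ≥0∞} {C : ℝ≥0∞}
    (hK : ∀ w, w ≠ 0 → K w = C * heatMixture d g 0 w) (x : EuclideanSpace ℝ (Fin d)) :
    convE d (heat d ε) K x = C * heatMixture d g (2 * ε) x := by
  have : NeZero d := ⟨hd.ne'⟩
  have hinner : ∀ y, ∫⁻ z, ENNReal.ofReal (heat d ε z) * K (x - y - z)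
      = C * heatMixture d g ε (x - y) := fun y => by
    calc ∫⁻ z, ENNReal.ofReal (heat d ε z) * K (x - y - z)
        = ∫⁻ z, C * (ENNReal.ofReal (heat d ε z) * heatMixture d g 0 (x - y - z)) :=
          lintegral_congr_ae <| (Measure.ae_ne volume (x - y)).mono fun z hz => by
            dsimp only
            rw [hK _ (sub_ne_zero.mpr hz.symm), mul_left_comm]
      _ = C * heatMixture d g ε (x - y) := by
          rw [lintegral_const_mul _ (by unfold heat; fun_prop),
            lintegral_heat_mul_heatMixture_sub hg hε le_rfl, zero_add]
  calc convE d (heat d ε) K x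
      = ∫⁻ y, ENNReal.ofReal (heat d ε y) * (C * heatMixture d g ε (x - y)) := by
        refine lintegral_congr fun y => ?_
        rw [← hinner, ← lintegral_const_mul' _ _ ENNReal.ofReal_ne_top]
        exact lintegral_congr fun z => by ring
    _ = C * heatMixture d g (2 * ε) x := by
        simp_rw [mul_left_comm (ENNReal.ofReal _) C]
        rw [lintegral_const_mul _ (by unfold heat; fun_prop),
          lintegral_heat_mul_heatMixture_sub hg hε hε.le, two_mul]

end Repulsive

theorem energyE_mono {d : ℕ} {K K' : EuclideanSpace ℝ (Fin d) → ℝ≥0∞} (hK : ∀ x, K x ≤ K' x)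
    (μ : Measure (EuclideanSpace ℝ (Fin d))) : energyE d K μ ≤ energyE d K' μ :=
  lintegral_mono fun _ => lintegral_mono fun _ => hK _

theorem heat_regularized_repulsive_energy_antitone_general
    (d : ℕ) (p : ℝ) (hp1 : 2 - (d : ℝ) ≤ p) (hp2 : p < 0)
    (ε₁ ε₂ : ℝ) (hε₂ : 0 < ε₂) (hε : ε₂ ≤ ε₁)
    (μ : Measure (EuclideanSpace ℝ (Fin d))) :
    energyE d (convE d (heat d ε₁) (KrE d p)) μ
      ≤ energyE d (convE d (heat d ε₂) (KrE d p)) μ := by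
  have hd : 0 < d := by exact_mod_cast (show (0 : ℝ) < d by linarith)
  set g : ℝ → ℝ≥0∞ := fun s => ENNReal.ofReal (s ^ ((p + d) / 2 - 1))
  have hg : Measurable g := by fun_prop
  have hg_mono : MonotoneOn g (Ioi 0) := fun s (hs : 0 < s) _ _ hst =>
    ENNReal.ofReal_le_ofReal (Real.rpow_le_rpow hs.le hst (by linarith))
  obtain ⟨C, hC⟩ := exists_KrE_eq_mul_heatMixture (d := d) hp2
  refine energyE_mono (fun x => ?_) μ
  rw [convE_heat_eq_mul_heatMixture hd hg (hε₂.trans_le hε) hC,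
    convE_heat_eq_mul_heatMixture hd hg hε₂ hC]
  gcongr
  exact heatMixture_antitone hg_mono x (by linarith)

/-- Monotonicity in `ε` of the heat-kernel regularized repulsive energy. -/
theorem heat_regularized_repulsive_energy_antitone
    (d : ℕ) (hd : 3 ≤ d) (p q : ℝ) (hp1 : 2 - (d : ℝ) ≤ p) (hp2 : p < 0)
    (hq1 : 0 < q) (hq2 : q ≤ 2)
    (ε₁ ε₂ : ℝ) (hε₂ : 0 < ε₂) (hε : ε₂ ≤ ε₁)
    (μ : Measure (EuclideanSpace ℝ (Fin d))) (hμ : IsP2 d μ) :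
    energyE d (convE d (heat d ε₁) (KrE d p)) μ
      ≤ energyE d (convE d (heat d ε₂) (KrE d p)) μ :=
  heat_regularized_repulsive_energy_antitone_general d p hp1 hp2 ε₁ ε₂ hε₂ hε μ
end
end

section
/- The interaction energy E admits a minimizer over P_2(ℝ^d): there exists μ₀ ∈ P_2(ℝ^d) such that E(μ₀) ≤ E(ν) for all ν ∈ P_2(ℝ^d). -/
open MeasureTheory Filter
open scoped ENNReal Topology NNReal

noncomputable section

/-!
Both the energy and `P₂` are invariant under translations, and `K(x) ≥ |x|^q/q → ∞`. Hence a
probability measure of energy at most `C` puts mass `≥ 1/2` on some ball of a radius depending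
only on `C`, and once it is recentred there, its mass outside `B(0, R₀ + R)` is at most
`2C / inf_{|z| > R} K(z)`. A recentred minimizing sequence is therefore tight, and by Prokhorov's
theorem a subsequence converges weakly to some `μ`. As `K` is continuous with values in `[0, ∞]`,
the energy is lower semicontinuous for weak convergence, so `E(μ)` is at most the infimum over
`P₂`. The limit need not have a finite second moment, but restricting it to a large ball `B` and
renormalizing does not increase the energy: with `m = μ(B)`, `s = μ(Bᶜ)`, the interaction between
`B` and `Bᶜ` is at least `2 s E(μ)`, which is exactly the slack in `E(μ) ≤ m² E(μ) + 2 s E(μ)`.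
-/

open Metric Set TopologicalSpace

theorem mul_measure_le_setLIntegral {α : Type*} [MeasurableSpace α] {μ : Measure α} {s : Set α}
    (hs : MeasurableSet s) {f : α → ℝ≥0∞} {c : ℝ≥0∞} (hf : ∀ x ∈ s, c ≤ f x) :
    c * μ s ≤ ∫⁻ x in s, f x ∂μ :=
  (setLIntegral_const s c).symm.trans_le (setLIntegral_mono' hs hf)

theorem exists_forall_lt_norm_le_of_tendsto_cocompact {E : Type*} [SeminormedAddCommGroup E]
    {f : E → ℝ≥0∞} (hf : Tendsto f (cocompact E) (𝓝 ∞)) {c : ℝ≥0∞} (hc : c ≠ ∞) :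
    ∃ R : ℝ, 0 ≤ R ∧ ∀ z, R < ‖z‖ → c ≤ f z := by
  obtain ⟨R, hR⟩ := closedBall_compl_subset_of_mem_cocompact
    (hf.eventually (lt_mem_nhds hc.lt_top)) 0
  refine ⟨max R 0, le_max_right _ _, fun z hz => (hR ?_).le⟩
  simpa using (le_max_left R 0).trans_lt hz

theorem exists_inv_two_lt_measure_closedBall {E : Type*} [SeminormedAddCommGroup E]
    [MeasurableSpace E] [OpensMeasurableSpace E] (μ : Measure E) [IsProbabilityMeasure μ] :
    ∃ R : ℝ, 2⁻¹ < μ (closedBall 0 R) := by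
  have hlim : Tendsto (fun n : ℕ => μ (closedBall 0 n)) atTop (𝓝 1) := by
    simpa [iUnion_closedBall_nat, Function.comp_def] using
      tendsto_measure_iUnion_atTop (μ := μ) fun m n (h : m ≤ n) =>
        closedBall_subset_closedBall (Nat.cast_le.2 h)
  obtain ⟨n, hn⟩ := (hlim.eventually (lt_mem_nhds ENNReal.one_half_lt_one)).exists
  exact ⟨n, hn⟩

theorem exists_seq_tendsto_iInf_of_ne_top {α : Type*} {P : α → Prop} {f : α → ℝ≥0∞}
    (h : ⨅ a, ⨅ (_ : P a), f a ≠ ∞) :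
    ∃ a : ℕ → α, (∀ n, P (a n)) ∧ (∀ n, f (a n) ≤ (⨅ a, ⨅ (_ : P a), f a) + 1) ∧
      Tendsto (fun n => f (a n)) atTop (𝓝 (⨅ a, ⨅ (_ : P a), f a)) := by
  set I := ⨅ a, ⨅ (_ : P a), f a
  have hex (n : ℕ) : ∃ a, P a ∧ f a < I + ((n : ℝ≥0∞) + 1)⁻¹ := by
    have : I < I + ((n : ℝ≥0∞) + 1)⁻¹ := ENNReal.lt_add_right h (by simp)
    simpa only [I, iInf_lt_iff, exists_prop] using this
  choose a ha hfa using hex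
  have hup : Tendsto (fun n : ℕ => I + ((n : ℝ≥0∞) + 1)⁻¹) atTop (𝓝 I) := by
    simpa using tendsto_const_nhds.add
      (ENNReal.tendsto_inv_nat_nhds_zero.comp (tendsto_add_atTop_nat 1))
  refine ⟨a, ha, fun n => (hfa n).le.trans ?_, tendsto_of_tendsto_of_tendsto_of_le_of_le
    tendsto_const_nhds hup (fun n => iInf₂_le _ (ha n)) fun n => (hfa n).le⟩
  gcongr
  exact ENNReal.inv_le_one.2 le_add_self

section Portmanteau

variable {X : Type*} [TopologicalSpace X] [MeasurableSpace X]

theorem lintegral_le_liminf_lintegral_of_tendsto [OpensMeasurableSpace X]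
    [HasOuterApproxClosed X]
    {μ : ProbabilityMeasure X} {μs : ℕ → ProbabilityMeasure X} (hμs : Tendsto μs atTop (𝓝 μ))
    {f : X → ℝ≥0∞} (hf : Continuous f) :
    ∫⁻ x, f x ∂μ ≤ atTop.liminf fun n => ∫⁻ x, f x ∂(μs n) := by
  have hfin : ∀ (N : ℕ) x, min (f x) N ≠ ∞ := fun N x =>
    ((min_le_right _ _).trans_lt (ENNReal.natCast_lt_top N)).ne
  have htrunc (N : ℕ) : ∫⁻ x, min (f x) N ∂μ ≤ atTop.liminf fun n => ∫⁻ x, f x ∂(μs n) := by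
    have hg : Continuous fun x => (min (f x) N).toReal :=
      ENNReal.continuousOn_toReal.comp_continuous (hf.min continuous_const) (hfin N)
    calc ∫⁻ x, min (f x) N ∂μ = ∫⁻ x, ENNReal.ofReal (min (f x) N).toReal ∂μ := by
          simp only [ENNReal.ofReal_toReal (hfin N _)]
      _ ≤ atTop.liminf fun n => ∫⁻ x, ENNReal.ofReal (min (f x) N).toReal ∂(μs n) :=
          lintegral_le_liminf_lintegral_of_forall_isOpen_measure_le_liminf_measure hg
            (fun _ => ENNReal.toReal_nonneg)
            fun _ hG => ProbabilityMeasure.le_liminf_measure_open_of_tendsto hμs hG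
      _ ≤ atTop.liminf fun n => ∫⁻ x, f x ∂(μs n) :=
          liminf_le_liminf <| .of_forall fun n => lintegral_mono fun x => by
            rw [ENNReal.ofReal_toReal (hfin N x)]
            exact min_le_left _ _
  have hsup : ∀ x, ⨆ N : ℕ, min (f x) N = f x := fun x => by
    rw [← inf_iSup_eq, ENNReal.iSup_natCast, inf_top_eq]
  calc ∫⁻ x, f x ∂μ = ∫⁻ x, ⨆ N : ℕ, min (f x) N ∂μ := by simp only [hsup]
    _ = ⨆ N : ℕ, ∫⁻ x, min (f x) N ∂μ :=
        lintegral_iSup (fun N => (hf.min continuous_const).measurable)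
          fun N M hNM x => min_le_min le_rfl (by exact_mod_cast hNM)
    _ ≤ _ := iSup_le htrunc

theorem exists_strictMono_tendsto_of_isTightMeasureSet [T2Space X] [BorelSpace X]
    [PseudoMetrizableSpace X] [SeparableSpace X] (μ : ℕ → ProbabilityMeasure X)
    (hμ : IsTightMeasureSet (range fun n => (μ n : Measure X))) :
    ∃ (ν : ProbabilityMeasure X) (φ : ℕ → ℕ), StrictMono φ ∧ Tendsto (μ ∘ φ) atTop (𝓝 ν) := by
  have hcpt : IsCompact (closure (range μ)) :=
    isCompact_closure_of_isTightMeasureSet <| by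
      convert hμ using 1
      ext
      simp
  obtain ⟨ν, -, φ, hφ, hlim⟩ := hcpt.tendsto_subseq fun n => subset_closure (mem_range_self n)
  exact ⟨ν, φ, hφ, hlim⟩

end Portmanteau

section InteractionEnergy

local notation "ℝ^" d:max => EuclideanSpace ℝ (Fin d)

variable {d : ℕ} {K : (ℝ^d) → ℝ≥0∞} {c : ℝ≥0∞} {R : ℝ}

theorem energyE_eq_lintegral_prod (hK : Measurable K) (μ : Measure (ℝ^d)) [SFinite μ] :
    energyE d K μ = ∫⁻ z, K (z.1 - z.2) ∂(μ.prod μ) :=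
  (lintegral_prod _ (hK.comp measurable_sub).aemeasurable).symm

theorem energyE_map_sub_const (hK : Measurable K) (μ : Measure (ℝ^d)) [SFinite μ] (z : ℝ^d) :
    energyE d K (μ.map (· - z)) = energyE d K μ := by
  have hz : Measurable fun x : ℝ^d => x - z := measurable_sub_const z
  have hinner (x : ℝ^d) : ∫⁻ y, K (x - y) ∂(μ.map (· - z)) = ∫⁻ y, K (x - (y - z)) ∂μ :=
    lintegral_map (hK.comp (measurable_const.sub measurable_id)) hz
  simp only [energyE, hinner]
  rw [lintegral_map _ hz]
  · simp only [sub_sub_sub_cancel_right]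
  · exact (hK.comp (measurable_fst.sub (measurable_snd.sub_const z))).lintegral_prod_right'

theorem energyE_smul (K : (ℝ^d) → ℝ≥0∞) (μ : Measure (ℝ^d)) {a : ℝ≥0∞} (ha : a ≠ ∞) :
    energyE d K (a • μ) = a * a * energyE d K μ := by
  simp only [energyE, lintegral_smul_measure, smul_eq_mul]
  rw [lintegral_const_mul' _ _ ha, mul_assoc]

theorem energyE_restrict_add_le (hK : Measurable K) (μ : Measure (ℝ^d)) [SFinite μ]
    {B : Set (ℝ^d)} (hB : MeasurableSet B) :
    energyE d K (μ.restrict B) + ∫⁻ x in B, ∫⁻ y in Bᶜ, K (x - y) ∂μ ∂μ ≤ energyE d K μ := by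
  have hmeas : Measurable fun x => ∫⁻ y in B, K (x - y) ∂μ :=
    (hK.comp (measurable_fst.sub measurable_snd)).lintegral_prod_right'
  calc energyE d K (μ.restrict B) + ∫⁻ x in B, ∫⁻ y in Bᶜ, K (x - y) ∂μ ∂μ
      = ∫⁻ x in B, ∫⁻ y, K (x - y) ∂μ ∂μ := by
        simp only [energyE, ← lintegral_add_left hmeas, lintegral_add_compl _ hB]
    _ ≤ energyE d K μ := setLIntegral_le_lintegral _ _

theorem exists_inv_two_le_measure_closedBall_of_energyE_lt (hKR : ∀ z, R < ‖z‖ → c ≤ K z)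
    (μ : Measure (ℝ^d)) [IsProbabilityMeasure μ] (hE : 2 * energyE d K μ < c) :
    ∃ x, 2⁻¹ ≤ μ (closedBall x R) := by
  by_contra! h
  have hfar (x : ℝ^d) : c * 2⁻¹ ≤ ∫⁻ y, K (x - y) ∂μ := by
    have hcompl : 2⁻¹ ≤ μ (closedBall x R)ᶜ := by
      by_contra! h'
      have hsum := measure_add_measure_compl (μ := μ)
        (measurableSet_closedBall (x := x) (ε := R))
      rw [measure_univ, ← ENNReal.inv_two_add_inv_two] at hsum
      exact (ENNReal.add_lt_add (h x) h').ne hsum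
    calc c * 2⁻¹ ≤ c * μ (closedBall x R)ᶜ := by gcongr
      _ ≤ ∫⁻ y in (closedBall x R)ᶜ, K (x - y) ∂μ :=
          mul_measure_le_setLIntegral measurableSet_closedBall.compl fun y hy =>
            hKR _ (by rwa [norm_sub_rev, ← dist_eq_norm, ← not_le])
      _ ≤ ∫⁻ y, K (x - y) ∂μ := setLIntegral_le_lintegral _ _
  have hlow : c * 2⁻¹ ≤ energyE d K μ := by
    simpa [energyE] using lintegral_mono (μ := μ) hfar
  refine hE.not_ge ?_
  calc c = 2 * (c * 2⁻¹) := by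
        rw [← div_eq_mul_inv, ENNReal.mul_div_cancel two_ne_zero ENNReal.ofNat_ne_top]
    _ ≤ 2 * energyE d K μ := by gcongr

theorem mul_measure_closedBall_mul_measure_compl_le (hKR : ∀ z, R < ‖z‖ → c ≤ K z)
    (μ : Measure (ℝ^d)) (R₀ : ℝ) :
    c * μ (closedBall 0 R₀) * μ (closedBall 0 (R₀ + R))ᶜ ≤
      ∫⁻ x in closedBall 0 R₀, ∫⁻ y in (closedBall 0 (R₀ + R))ᶜ, K (x - y) ∂μ ∂μ := by
  rw [mul_right_comm]
  refine mul_measure_le_setLIntegral measurableSet_closedBall fun x hx =>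
    mul_measure_le_setLIntegral measurableSet_closedBall.compl fun y hy => hKR _ ?_
  rw [mem_closedBall_zero_iff] at hx
  rw [mem_compl_iff, mem_closedBall_zero_iff, not_le] at hy
  linarith [norm_sub_norm_le y x, norm_sub_rev x y]

theorem isTightMeasureSet_of_energyE_le (hK : Tendsto K (cocompact _) (𝓝 ∞))
    {S : Set (Measure (ℝ^d))} {R₀ : ℝ} {C : ℝ≥0∞} (hC : C ≠ ∞)
    (hS : ∀ μ ∈ S, 2⁻¹ ≤ μ (closedBall 0 R₀) ∧ energyE d K μ ≤ C) : IsTightMeasureSet S := by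
  rw [isTightMeasureSet_iff_exists_isCompact_measure_compl_le]
  intro ε hε
  rcases eq_or_ne ε ∞ with rfl | hεtop
  · exact ⟨∅, isCompact_empty, fun _ _ => le_top⟩
  -- the `+ 1` keeps `c ≠ 0` when `C = 0`
  set c := 2 * C / ε + 1
  have hc0 : c ≠ 0 := by simp [c]
  have hctop : c ≠ ∞ := by finiteness
  obtain ⟨R, -, hR⟩ := exists_forall_lt_norm_le_of_tendsto_cocompact hK hctop
  refine ⟨closedBall 0 (R₀ + R), isCompact_closedBall _ _, fun μ hμ => ?_⟩
  obtain ⟨hball, hE⟩ := hS μ hμ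
  set t := μ (closedBall 0 (R₀ + R))ᶜ
  have htail : c * 2⁻¹ * t ≤ C := calc
    c * 2⁻¹ * t ≤ c * μ (closedBall 0 R₀) * t := by gcongr
    _ ≤ ∫⁻ x in closedBall 0 R₀, ∫⁻ y in (closedBall 0 (R₀ + R))ᶜ, K (x - y) ∂μ ∂μ :=
        mul_measure_closedBall_mul_measure_compl_le hR μ R₀
    _ ≤ energyE d K μ := (setLIntegral_le_lintegral _ _).trans
        (lintegral_mono fun x => setLIntegral_le_lintegral _ _)
    _ ≤ C := hE
  refine (ENNReal.mul_le_mul_iff_right hc0 hctop).1 ?_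
  calc c * t = 2 * (c * 2⁻¹ * t) := by
        rw [mul_right_comm c, ← div_eq_mul_inv,
          ENNReal.mul_div_cancel two_ne_zero ENNReal.ofNat_ne_top]
    _ ≤ 2 * C := by gcongr
    _ = 2 * C / ε * ε := (ENNReal.div_mul_cancel hε.ne' hεtop).symm
    _ ≤ c * ε := by gcongr; exact le_self_add

theorem energyE_restrict_closedBall_le (hK : Measurable K) (μ : Measure (ℝ^d))
    [IsProbabilityMeasure μ] (hE : energyE d K μ ≠ ∞)
    (hKR : ∀ z, R < ‖z‖ → 4 * energyE d K μ ≤ K z) (hR : 0 ≤ R) {R₀ : ℝ}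
    (hR₀ : 2⁻¹ ≤ μ (closedBall 0 R₀)) :
    energyE d K (μ.restrict (closedBall 0 (R₀ + R))) ≤
      μ (closedBall 0 (R₀ + R)) ^ 2 * energyE d K μ := by
  set E := energyE d K μ
  set m := μ (closedBall 0 (R₀ + R))
  set s := μ (closedBall 0 (R₀ + R))ᶜ
  have hms : m + s = 1 := by
    rw [measure_add_measure_compl measurableSet_closedBall, measure_univ]
  have hcross : 2 * s * E ≤ ∫⁻ x in closedBall 0 (R₀ + R), ∫⁻ y in (closedBall 0 (R₀ + R))ᶜ,
      K (x - y) ∂μ ∂μ := calc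
    2 * s * E = 4 * 2⁻¹ * s * E := by
        rw [show (4 : ℝ≥0∞) = 2 * 2 by norm_num, mul_assoc 2 2,
          ENNReal.mul_inv_cancel two_ne_zero ENNReal.ofNat_ne_top, mul_one]
    _ = 4 * E * 2⁻¹ * s := by ring
    _ ≤ 4 * E * μ (closedBall 0 R₀) * s := by gcongr
    _ ≤ _ := mul_measure_closedBall_mul_measure_compl_le hKR μ R₀
    _ ≤ _ := lintegral_mono_set (closedBall_subset_closedBall (by linarith))
  have hsq : E ≤ m ^ 2 * E + 2 * s * E := calc
    E = (m + s) ^ 2 * E := by rw [hms, one_pow, one_mul]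
    _ = (m ^ 2 + s * (2 * m + s)) * E := by ring
    _ ≤ (m ^ 2 + s * (2 * (m + s))) * E := by
        gcongr
        rw [mul_add, two_mul s]
        gcongr
        exact le_add_self
    _ = m ^ 2 * E + 2 * s * E := by rw [hms]; ring
  refine ENNReal.le_of_add_le_add_right (a := 2 * s * E) (by finiteness) ?_
  calc energyE d K (μ.restrict (closedBall 0 (R₀ + R))) + 2 * s * E
      ≤ energyE d K (μ.restrict (closedBall 0 (R₀ + R))) + ∫⁻ x in closedBall 0 (R₀ + R),
          ∫⁻ y in (closedBall 0 (R₀ + R))ᶜ, K (x - y) ∂μ ∂μ := by gcongr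
    _ ≤ E := energyE_restrict_add_le hK μ measurableSet_closedBall
    _ ≤ m ^ 2 * E + 2 * s * E := hsq

theorem exists_isP2_energyE_le (hK : Measurable K) (hKc : Tendsto K (cocompact _) (𝓝 ∞))
    (μ : Measure (ℝ^d)) [IsProbabilityMeasure μ] (hE : energyE d K μ ≠ ∞) :
    ∃ ν, IsP2 d ν ∧ energyE d K ν ≤ energyE d K μ := by
  obtain ⟨R₀, hR₀⟩ := exists_inv_two_lt_measure_closedBall μ
  obtain ⟨R, hR, hKR⟩ := exists_forall_lt_norm_le_of_tendsto_cocompact hKc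
    (c := 4 * energyE d K μ) (by finiteness)
  set m := μ (closedBall 0 (R₀ + R))
  have hm : m ≠ 0 := ((ENNReal.inv_pos.2 ENNReal.ofNat_ne_top).trans_le
    (hR₀.le.trans (measure_mono (closedBall_subset_closedBall (by linarith))))).ne'
  have hmtop : m ≠ ∞ := measure_ne_top _ _
  refine ⟨m⁻¹ • μ.restrict (closedBall 0 (R₀ + R)), ⟨⟨?_⟩, ?_⟩, ?_⟩
  · simp [m, ENNReal.inv_mul_cancel hm hmtop]
  · rw [lintegral_smul_measure]
    refine ENNReal.mul_lt_top (by simpa [pos_iff_ne_zero]) ?_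
    simpa using setLIntegral_lt_top_of_isCompact hmtop (isCompact_closedBall _ _)
      (continuous_nnnorm.pow 2)
  · rw [energyE_smul _ _ (ENNReal.inv_ne_top.2 hm)]
    calc m⁻¹ * m⁻¹ * energyE d K (μ.restrict (closedBall 0 (R₀ + R)))
        ≤ m⁻¹ * m⁻¹ * (m ^ 2 * energyE d K μ) := by
          gcongr
          exact energyE_restrict_closedBall_le hK μ hE hKR hR hR₀.le
      _ = (m⁻¹ * m) * (m⁻¹ * m) * energyE d K μ := by ring
      _ = energyE d K μ := by rw [ENNReal.inv_mul_cancel hm hmtop, one_mul, one_mul]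

theorem energyE_le_liminf_of_tendsto (hK : Continuous K) {μ : ProbabilityMeasure (ℝ^d)}
    {μs : ℕ → ProbabilityMeasure (ℝ^d)} (hμs : Tendsto μs atTop (𝓝 μ)) :
    energyE d K μ ≤ atTop.liminf fun n => energyE d K (μs n) := by
  have hprod : Tendsto (fun n => (μs n).prod (μs n)) atTop (𝓝 (μ.prod μ)) :=
    (ProbabilityMeasure.continuous_prod.tendsto (μ, μ)).comp (hμs.prodMk_nhds hμs)
  simpa only [energyE_eq_lintegral_prod hK.measurable, ProbabilityMeasure.toMeasure_prod,
    Function.comp_def] using lintegral_le_liminf_lintegral_of_tendsto hprod (hK.comp continuous_sub)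

theorem exists_probabilityMeasure_energyE_le_iInf (hK : Continuous K)
    (hKc : Tendsto K (cocompact _) (𝓝 ∞)) (hI : ⨅ ν, ⨅ (_ : IsP2 d ν), energyE d K ν ≠ ∞) :
    ∃ μ : ProbabilityMeasure (ℝ^d), energyE d K μ ≤ ⨅ ν, ⨅ (_ : IsP2 d ν), energyE d K ν := by
  obtain ⟨ν, hνP2, hνC, hνI⟩ := exists_seq_tendsto_iInf_of_ne_top hI
  set C := (⨅ ν, ⨅ (_ : IsP2 d ν), energyE d K ν) + 1
  obtain ⟨R₀, -, hR₀⟩ := exists_forall_lt_norm_le_of_tendsto_cocompact hKc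
    (c := 2 * C + 1) (by finiteness)
  have hcenter (n : ℕ) : ∃ z, 2⁻¹ ≤ ν n (closedBall z R₀) :=
    haveI := (hνP2 n).1
    exists_inv_two_le_measure_closedBall_of_energyE_lt hR₀ (ν n)
      ((show 2 * energyE d K (ν n) ≤ 2 * C by gcongr; exact hνC n).trans_lt
        (ENNReal.lt_add_right (by finiteness) one_ne_zero))
  choose z hz using hcenter
  let μs (n : ℕ) : ProbabilityMeasure (ℝ^d) :=
    ⟨(ν n).map (· - z n), haveI := (hνP2 n).1
      Measure.isProbabilityMeasure_map (measurable_sub_const _).aemeasurable⟩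
  have hμsE (n : ℕ) : energyE d K (μs n) = energyE d K (ν n) :=
    haveI := (hνP2 n).1
    energyE_map_sub_const hK.measurable _ _
  have hμs_ball (n : ℕ) : 2⁻¹ ≤ (μs n : Measure (ℝ^d)) (closedBall 0 R₀) := by
    change 2⁻¹ ≤ (ν n).map (· - z n) (closedBall 0 R₀)
    rw [Measure.map_apply (measurable_sub_const _) measurableSet_closedBall]
    convert hz n using 2
    ext
    simp [dist_eq_norm]
  have htight : IsTightMeasureSet (range fun n => (μs n : Measure (ℝ^d))) :=
    isTightMeasureSet_of_energyE_le hKc (C := C) (by finiteness) <| by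
      rintro _ ⟨n, rfl⟩
      exact ⟨hμs_ball n, (hμsE n).trans_le (hνC n)⟩
  obtain ⟨μ, φ, hφ, hlim⟩ := exists_strictMono_tendsto_of_isTightMeasureSet μs htight
  refine ⟨μ, (energyE_le_liminf_of_tendsto hK hlim).trans_eq ?_⟩
  exact ((hνI.comp hφ.tendsto_atTop).congr fun n => (hμsE (φ n)).symm).liminf_eq

theorem exists_isP2_forall_energyE_le (hK : Continuous K)
    (hKc : Tendsto K (cocompact _) (𝓝 ∞)) :
    ∃ μ₀, IsP2 d μ₀ ∧ ∀ ν, IsP2 d ν → energyE d K μ₀ ≤ energyE d K ν := by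
  by_cases hI : ⨅ ν, ⨅ (_ : IsP2 d ν), energyE d K ν = ∞
  · refine ⟨Measure.dirac 0, ⟨inferInstance, by simp⟩, fun ν hν => ?_⟩
    have hν_top := iInf₂_le (f := fun ν (_ : IsP2 d ν) => energyE d K ν) ν hν
    rw [hI, top_le_iff] at hν_top
    exact hν_top ▸ le_top
  obtain ⟨μ, hμ⟩ := exists_probabilityMeasure_energyE_le_iInf hK hKc hI
  obtain ⟨μ₀, hμ₀, hE⟩ := exists_isP2_energyE_le hK.measurable hKc μ (ne_top_of_le_ne_top hI hμ)
  exact ⟨μ₀, hμ₀, fun ν hν => hE.trans (hμ.trans (iInf₂_le ν hν))⟩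

end InteractionEnergy

section PowerLawKernel

variable {d : ℕ} {p q : ℝ}

theorem continuous_KE (hp : p < 0) (hq : 0 < q) : Continuous (KE d p q) := by
  have hnorm : Continuous fun x : EuclideanSpace ℝ (Fin d) => (‖x‖₊ : ℝ≥0∞) :=
    ENNReal.continuous_coe.comp continuous_nnnorm
  exact ((ENNReal.continuous_div_const _ (by simpa using hq)).comp
      (ENNReal.continuous_rpow_const.comp hnorm)).add
    ((ENNReal.continuous_div_const _ (by simpa using hp)).comp
      (ENNReal.continuous_rpow_const.comp hnorm))

theorem ofReal_norm_rpow_div_le_KE (hq : 0 < q) (z : EuclideanSpace ℝ (Fin d)) :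
    ENNReal.ofReal (‖z‖ ^ q / q) ≤ KE d p q z := by
  rw [ENNReal.ofReal_div_of_pos hq, ← ENNReal.ofReal_rpow_of_nonneg (norm_nonneg z) hq.le,
    ofReal_norm, enorm_eq_nnnorm]
  exact le_self_add

theorem tendsto_KE_cocompact (hq : 0 < q) :
    Tendsto (KE d p q) (cocompact _) (𝓝 ∞) :=
  tendsto_nhds_top_mono (ENNReal.tendsto_ofReal_atTop.comp
      (((tendsto_rpow_atTop hq).comp tendsto_norm_cocompact_atTop).atTop_div_const hq))
    (.of_forall (ofReal_norm_rpow_div_le_KE hq))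

end PowerLawKernel

theorem energy_has_minimizer_general
    (d : ℕ) (p q : ℝ) (hp2 : p < 0)
    (hq1 : 0 < q) :
    ∃ μ₀ : Measure (EuclideanSpace ℝ (Fin d)), IsP2 d μ₀ ∧
      ∀ ν : Measure (EuclideanSpace ℝ (Fin d)), IsP2 d ν →
        energyE d (KE d p q) μ₀ ≤ energyE d (KE d p q) ν :=
  exists_isP2_forall_energyE_le (continuous_KE hp2 hq1) (tendsto_KE_cocompact hq1)

/-- The interaction energy `E` admits a minimizer over `P₂(ℝ^d)`. -/
theorem energy_has_minimizer
    (d : ℕ) (hd : 3 ≤ d) (p q : ℝ) (hp1 : 2 - (d : ℝ) ≤ p) (hp2 : p < 0)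
    (hq1 : 0 < q) (hq2 : q ≤ 2) :
    ∃ μ₀ : Measure (EuclideanSpace ℝ (Fin d)), IsP2 d μ₀ ∧
      ∀ ν : Measure (EuclideanSpace ℝ (Fin d)), IsP2 d ν →
        energyE d (KE d p q) μ₀ ≤ energyE d (KE d p q) ν :=
  energy_has_minimizer_general d p q hp2 hq1
end
end

section
/- Fix R > 0 and let φ be a mollifier satisfying (M1)–(M3). Let ε_k → 0 and let μ_k be Borel probability measures on ℝ^d that are absolutely continuous with densities bounded by R and converge weakly-* to a probability measure μ. Then the doubly mollified measures converge to μ in the weak-* topology of L^∞: for every f ∈ L¹(ℝ^d), ∫_{ℝ^d} (φ_{ε_k} * f * φ_{ε_k})(x) dμ_k(x) → ∫_{ℝ^d} f(x) dμ(x) as k → ∞; equivalently, ∫ f(x) (φ_{ε_k}*μ_k*φ_{ε_k})(x) dx → ∫ f dμ. -/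
open MeasureTheory Filter
open scoped ENNReal Topology NNReal

noncomputable section

/-!
Write `c_k = φ_{ε_k}`, so that the integrand is `(c_k ⋆ c_k ⋆ f)(x)`. Convolution with a
probability density is a contraction of `L¹`, and `c_k ⋆ h → h` in `L¹` for continuous compactly
supported `h` (continuity of translations in `L¹`, then dominated convergence after substituting
`y = ε_k z`); by density, `c_k ⋆ c_k ⋆ f → f` in `L¹` for every integrable `f`. Every `μ_k` is
dominated by `R · volume`, and so is the limit `ν` (portmanteau on open sets plus outer
regularity), so integrating against any of them is `R`-Lipschitz in `L¹`. Hence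
`∫ c_k ⋆ c_k ⋆ f dμ_k - ∫ f dμ_k → 0`, and `∫ f dμ_k → ∫ f dν` follows from the weak-*
convergence by the same `L¹` approximation of `f`.
-/

open scoped Convolution
open Metric

local notation "mulL" => ContinuousLinearMap.mul ℝ ℝ

lemma tendsto_of_forall_approx {ι X : Type*} [PseudoMetricSpace X] {l : Filter ι} {u : ι → X}
    {a : X} (happrox : ∀ δ > 0, ∃ v : ι → X, ∃ b, Tendsto v l (𝓝 b) ∧ dist a b ≤ δ ∧
      ∀ i, dist (u i) (v i) ≤ δ) :
    Tendsto u l (𝓝 a) := by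
  refine Metric.tendsto_nhds.2 fun ε hε => ?_
  obtain ⟨v, b, hv, hab, huv⟩ := happrox (ε / 3) (by positivity)
  filter_upwards [Metric.tendsto_nhds.1 hv (ε / 3) (by positivity)] with i hi
  calc dist (u i) a ≤ dist (u i) (v i) + dist (v i) b + dist b a := dist_triangle4 _ _ _ _
    _ < ε := by rw [dist_comm b a]; linarith [huv i]

structure IsProbabilityDensity {G : Type*} [MeasurableSpace G] (μ : Measure G) (c : G → ℝ) :
    Prop where
  integrable : Integrable c μ
  nonneg : ∀ x, 0 ≤ c x
  integral_eq_one : ∫ x, c x ∂μ = 1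

section Convolution

variable {G : Type*} [NormedAddCommGroup G] [NormedSpace ℝ G] [FiniteDimensional ℝ G]
  [MeasurableSpace G] [BorelSpace G] {μ : Measure G} [μ.IsAddHaarMeasure] {c : G → ℝ}

lemma integral_abs_convolution_le {u : G → ℝ} (hc : Integrable c μ) (hu : Integrable u μ) :
    ∫ x, |(c ⋆[mulL, μ] u) x| ∂μ ≤ (∫ x, |c x| ∂μ) * ∫ x, |u x| ∂μ := by
  have hpt : ∀ x, |(c ⋆[mulL, μ] u) x| ≤ ((fun y => |c y|) ⋆[mulL, μ] fun y => |u y|) x :=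
    fun x => by
      simpa only [convolution_mul, Real.norm_eq_abs, abs_mul] using
        norm_integral_le_integral_norm (μ := μ) (fun t => c t * u (x - t))
  calc ∫ x, |(c ⋆[mulL, μ] u) x| ∂μ
      ≤ ∫ x, ((fun y => |c y|) ⋆[mulL, μ] fun y => |u y|) x ∂μ :=
        integral_mono (hc.integrable_convolution mulL hu).abs
          (hc.abs.integrable_convolution mulL hu.abs) hpt
    _ = (∫ x, |c x| ∂μ) * ∫ x, |u x| ∂μ := integral_convolution mulL hc.abs hu.abs

lemma IsProbabilityDensity.integral_abs_convolution_sub_le (hc : IsProbabilityDensity μ c)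
    {u v : G → ℝ} (hu : Integrable u μ) (hv : Integrable v μ) :
    ∫ x, |(c ⋆[mulL, μ] u) x - (c ⋆[mulL, μ] v) x| ∂μ ≤ ∫ x, |u x - v x| ∂μ := by
  have hsub : (fun x => (c ⋆[mulL, μ] u) x - (c ⋆[mulL, μ] v) x)
      =ᵐ[μ] c ⋆[mulL, μ] fun x => u x - v x := by
    filter_upwards [hc.integrable.ae_convolution_exists mulL hu,
      hc.integrable.ae_convolution_exists mulL hv] with x hxu hxv
    simp only [convolution_mul, mul_sub]
    exact (integral_sub hxu hxv).symm
  have hc_abs : ∫ x, |c x| ∂μ = 1 := by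
    simp_rw [abs_of_nonneg (hc.nonneg _)]
    exact hc.integral_eq_one
  calc ∫ x, |(c ⋆[mulL, μ] u) x - (c ⋆[mulL, μ] v) x| ∂μ
      = ∫ x, |(c ⋆[mulL, μ] fun x => u x - v x) x| ∂μ := integral_congr_ae (hsub.fun_comp abs)
    _ ≤ ∫ x, |u x - v x| ∂μ := by
        simpa [hc_abs] using
          integral_abs_convolution_le (u := fun x => u x - v x) hc.integrable (hu.sub hv)

lemma IsProbabilityDensity.abs_sub_integral_abs_convolution_sub_self_le
    (hc : IsProbabilityDensity μ c) {f h : G → ℝ} (hf : Integrable f μ) (hh : Integrable h μ) :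
    |∫ x, |(c ⋆[mulL, μ] f) x - f x| ∂μ - ∫ x, |(c ⋆[mulL, μ] h) x - h x| ∂μ|
      ≤ 2 * ∫ x, |f x - h x| ∂μ := by
  have hcf := hc.integrable.integrable_convolution mulL hf
  have hch := hc.integrable.integrable_convolution mulL hh
  calc |∫ x, |(c ⋆[mulL, μ] f) x - f x| ∂μ - ∫ x, |(c ⋆[mulL, μ] h) x - h x| ∂μ|
      = |∫ x, (|(c ⋆[mulL, μ] f) x - f x| - |(c ⋆[mulL, μ] h) x - h x|) ∂μ| := by
        congr 1
        exact (integral_sub (hcf.sub hf).abs (hch.sub hh).abs).symm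
    _ ≤ ∫ x, (|(c ⋆[mulL, μ] f) x - (c ⋆[mulL, μ] h) x| + |f x - h x|) ∂μ := by
        refine abs_integral_le_integral_abs.trans (integral_mono
          ((hcf.sub hf).abs.sub (hch.sub hh).abs).abs ((hcf.sub hch).abs.add (hf.sub hh).abs)
          fun x => ?_)
        refine (abs_abs_sub_abs_le_abs_sub _ _).trans ?_
        rw [show (c ⋆[mulL, μ] f) x - f x - ((c ⋆[mulL, μ] h) x - h x)
          = ((c ⋆[mulL, μ] f) x - (c ⋆[mulL, μ] h) x) - (f x - h x) by ring]
        exact abs_sub _ _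
    _ = ∫ x, |(c ⋆[mulL, μ] f) x - (c ⋆[mulL, μ] h) x| ∂μ + ∫ x, |f x - h x| ∂μ :=
        integral_add (hcf.sub hch).abs (hf.sub hh).abs
    _ ≤ 2 * ∫ x, |f x - h x| ∂μ := by linarith [hc.integral_abs_convolution_sub_le hf hh]

lemma IsProbabilityDensity.integral_abs_convolution_convolution_sub_le
    (hc : IsProbabilityDensity μ c) {f : G → ℝ} (hf : Integrable f μ) :
    ∫ x, |(c ⋆[mulL, μ] (c ⋆[mulL, μ] f)) x - f x| ∂μ
      ≤ 2 * ∫ x, |(c ⋆[mulL, μ] f) x - f x| ∂μ := by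
  have hcf := hc.integrable.integrable_convolution mulL hf
  have hccf := hc.integrable.integrable_convolution mulL hcf
  calc ∫ x, |(c ⋆[mulL, μ] (c ⋆[mulL, μ] f)) x - f x| ∂μ
      ≤ ∫ x, (|(c ⋆[mulL, μ] (c ⋆[mulL, μ] f)) x - (c ⋆[mulL, μ] f) x|
          + |(c ⋆[mulL, μ] f) x - f x|) ∂μ :=
        integral_mono (hccf.sub hf).abs ((hccf.sub hcf).abs.add (hcf.sub hf).abs)
          fun x => abs_sub_le _ _ _
    _ = ∫ x, |(c ⋆[mulL, μ] (c ⋆[mulL, μ] f)) x - (c ⋆[mulL, μ] f) x| ∂μ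
          + ∫ x, |(c ⋆[mulL, μ] f) x - f x| ∂μ :=
        integral_add (hccf.sub hcf).abs (hcf.sub hf).abs
    _ ≤ 2 * ∫ x, |(c ⋆[mulL, μ] f) x - f x| ∂μ := by
        linarith [hc.integral_abs_convolution_sub_le hcf hf]

lemma HasCompactSupport.tendsto_integral_abs_comp_sub_sub {h : G → ℝ}
    (hs : HasCompactSupport h) (hh : Continuous h) :
    Tendsto (fun t => ∫ x, |h (x - t) - h x| ∂μ) (𝓝 0) (𝓝 0) := by
  obtain ⟨C, hC⟩ := hh.bounded_above_of_compact_support hs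
  obtain ⟨r, hr⟩ := hs.isBounded.subset_closedBall 0
  have hzero : ∀ y ∉ closedBall (0 : G) r, h y = 0 := fun y hy =>
    image_eq_zero_of_notMem_tsupport fun hy' => hy (hr hy')
  have hbound : ∀ t ∈ ball (0 : G) 1, ∀ x,
      ‖|h (x - t) - h x|‖ ≤ (closedBall (0 : G) (r + 1)).indicator (fun _ => 2 * C) x := by
    intro t ht x
    rw [mem_ball_zero_iff] at ht
    by_cases hx : x ∈ closedBall (0 : G) (r + 1)
    · rw [Set.indicator_of_mem hx, norm_abs_eq_norm, two_mul]
      exact (norm_sub_le _ _).trans (add_le_add (hC _) (hC _))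
    · have hxr : r + 1 < ‖x‖ := by simpa using hx
      have hxt : x - t ∉ closedBall (0 : G) r := by
        rw [mem_closedBall_zero_iff, not_le]
        linarith [norm_sub_norm_le x t]
      have hx' : x ∉ closedBall (0 : G) r := by
        rw [mem_closedBall_zero_iff, not_le]
        linarith
      simp [Set.indicator_of_notMem hx, hzero _ hxt, hzero _ hx']
  have hdct := tendsto_integral_filter_of_dominated_convergence (μ := μ) (l := 𝓝 (0 : G))
    (F := fun t x => |h (x - t) - h x|) (f := fun _ => 0) _
    (Eventually.of_forall fun t =>
      ((hh.comp (continuous_id.sub continuous_const)).sub hh).abs.aestronglyMeasurable)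
    (eventually_of_mem (ball_mem_nhds 0 one_pos) fun t ht => Eventually.of_forall (hbound t ht))
    ((integrableOn_const measure_closedBall_lt_top.ne).integrable_indicator
      measurableSet_closedBall)
    (Eventually.of_forall fun x =>
      ((hh.comp (continuous_const.sub continuous_id)).sub continuous_const).abs.tendsto' 0 0
        (by simp))
  simpa using hdct

lemma IsProbabilityDensity.integral_abs_convolution_sub_self_le {h : G → ℝ}
    (hc : IsProbabilityDensity μ c) (hh : Integrable h μ) :
    ∫ x, |(c ⋆[mulL, μ] h) x - h x| ∂μ ≤ ∫ y, c y * ∫ x, |h (x - y) - h x| ∂μ ∂μ := by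
  have hF : Integrable (fun p : G × G => c p.2 * |h (p.1 - p.2) - h p.1|) (μ.prod μ) := by
    refine Integrable.mono' ((hc.integrable.convolution_integrand mulL hh).norm.add
      (hh.norm.mul_prod hc.integrable)) ?_ (Eventually.of_forall fun p => ?_)
    · exact hc.integrable.aestronglyMeasurable.comp_snd.mul
        ((hh.aestronglyMeasurable.comp_quasiMeasurePreserving
          (quasiMeasurePreserving_sub_of_right_invariant μ μ)).sub
          hh.aestronglyMeasurable.comp_fst).norm
    · simp only [ContinuousLinearMap.mul_apply', norm_mul, Real.norm_eq_abs, abs_abs,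
        abs_of_nonneg (hc.nonneg p.2), Pi.add_apply]
      nlinarith [abs_sub (h (p.1 - p.2)) (h p.1), hc.nonneg p.2]
  have hpt : ∀ᵐ x ∂μ, |(c ⋆[mulL, μ] h) x - h x| ≤ ∫ y, c y * |h (x - y) - h x| ∂μ := by
    filter_upwards [hc.integrable.ae_convolution_exists mulL hh] with x hx
    have hdiff : (c ⋆[mulL, μ] h) x - h x = ∫ y, c y * (h (x - y) - h x) ∂μ := by
      simp_rw [mul_sub]
      rw [integral_sub (f := fun y => c y * h (x - y)) hx (hc.integrable.mul_const _),
        integral_mul_const, hc.integral_eq_one, one_mul, convolution_mul]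
    rw [hdiff]
    refine abs_integral_le_integral_abs.trans_eq
      (integral_congr_ae (Eventually.of_forall fun y => ?_))
    simp only [abs_mul, abs_of_nonneg (hc.nonneg y)]
  calc ∫ x, |(c ⋆[mulL, μ] h) x - h x| ∂μ ≤ ∫ x, ∫ y, c y * |h (x - y) - h x| ∂μ ∂μ :=
        integral_mono_ae ((hc.integrable.integrable_convolution mulL hh).sub hh).abs
          hF.integral_prod_left hpt
    _ = ∫ y, ∫ x, c y * |h (x - y) - h x| ∂μ ∂μ := integral_integral_swap hF
    _ = ∫ y, c y * ∫ x, |h (x - y) - h x| ∂μ ∂μ := by simp_rw [integral_const_mul]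

end Convolution

lemma integral_integral_mul_mul_eq_convolution_convolution {G : Type*} [AddGroup G]
    [MeasurableSpace G] (μ : Measure G) (c f : G → ℝ) (x : G) :
    ∫ y, ∫ z, c y * f (x - y - z) * c z ∂μ ∂μ = (c ⋆[mulL, μ] (c ⋆[mulL, μ] f)) x := by
  simp only [convolution_mul, ← integral_const_mul]
  congr 1 with y
  congr 1 with z
  ring

section Mollifier

variable {d : ℕ} {φ : EuclideanSpace ℝ (Fin d) → ℝ}

lemma IsMollifier.isProbabilityDensity (hφ : IsMollifier d φ) :
    IsProbabilityDensity volume φ where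
  integrable := .of_integral_ne_zero (by rw [hφ.2.2.2.1]; exact one_ne_zero)
  nonneg := hφ.2.2.1
  integral_eq_one := hφ.2.2.2.1

lemma integral_scaled_mul {ε : ℝ} (hε : 0 < ε) (g : EuclideanSpace ℝ (Fin d) → ℝ) :
    ∫ x, scaled d φ ε x * g x = ∫ x, φ x * g (ε • x) := by
  have hcov := Measure.integral_comp_inv_smul_of_nonneg volume (fun y => φ y * g (ε • y)) hε.le
  simp only [finrank_euclideanSpace_fin, smul_smul, mul_inv_cancel₀ hε.ne', one_smul,
    smul_eq_mul] at hcov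
  simp only [scaled, mul_assoc, integral_const_mul, hcov]
  field_simp

lemma IsProbabilityDensity.scaled (hφ : IsProbabilityDensity volume φ) {ε : ℝ} (hε : 0 < ε) :
    IsProbabilityDensity volume (scaled d φ ε) where
  integrable := (hφ.integrable.comp_smul (inv_ne_zero hε.ne')).const_mul _
  nonneg x := mul_nonneg (inv_nonneg.2 (pow_pos hε d).le) (hφ.nonneg _)
  integral_eq_one := by simpa [hφ.integral_eq_one] using integral_scaled_mul (φ := φ) hε 1

variable {ι : Type*} {l : Filter ι} {ε : ι → ℝ}

lemma HasCompactSupport.tendsto_integral_abs_scaled_convolution_sub [l.IsCountablyGenerated]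
    {h : EuclideanSpace ℝ (Fin d) → ℝ} (hs : HasCompactSupport h) (hh : Continuous h)
    (hφ : IsProbabilityDensity volume φ) (hεpos : ∀ i, 0 < ε i) (hε0 : Tendsto ε l (𝓝 0)) :
    Tendsto (fun i => ∫ x, |(scaled d φ (ε i) ⋆[mulL, volume] h) x - h x|) l (𝓝 0) := by
  let w : EuclideanSpace ℝ (Fin d) → ℝ := fun t => ∫ x, |h (x - t) - h x|
  have hint : Integrable h := hh.integrable_of_hasCompactSupport hs
  have hw_le (t) : w t ≤ 2 * ∫ x, |h x| := calc
    w t ≤ ∫ x, (|h (x - t)| + |h x|) :=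
        integral_mono ((hint.comp_sub_right t).sub hint).abs
          ((hint.comp_sub_right t).abs.add hint.abs) fun x => abs_sub _ _
    _ = 2 * ∫ x, |h x| := by
        rw [integral_add (hint.comp_sub_right t).abs hint.abs,
          integral_sub_right_eq_self (fun x => |h x|) t]
        ring
  have hw_meas : StronglyMeasurable w :=
    ((hh.comp (continuous_snd.sub continuous_fst)).sub
      (hh.comp continuous_snd)).abs.stronglyMeasurable.integral_prod_right
  have hdct : Tendsto (fun i => ∫ y, φ y * w (ε i • y)) l (𝓝 0) := by
    have hlim := tendsto_integral_filter_of_dominated_convergence (l := l)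
      (F := fun i y => φ y * w (ε i • y)) (f := fun _ => 0) (fun y => φ y * (2 * ∫ x, |h x|))
      (Eventually.of_forall fun i => hφ.integrable.aestronglyMeasurable.mul
        (hw_meas.comp_measurable (measurable_const_smul _)).aestronglyMeasurable)
      (Eventually.of_forall fun i => Eventually.of_forall fun y => ?_)
      (hφ.integrable.mul_const _) (Eventually.of_forall fun y => ?_)
    · simpa using hlim
    · rw [Real.norm_eq_abs, abs_of_nonneg (mul_nonneg (hφ.nonneg y)
        (integral_nonneg fun x => abs_nonneg _))]
      exact mul_le_mul_of_nonneg_left (hw_le _) (hφ.nonneg y)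
    · simpa using ((hs.tendsto_integral_abs_comp_sub_sub hh).comp
        (by simpa using hε0.smul_const y)).const_mul (φ y)
  refine squeeze_zero (fun i => integral_nonneg fun x => abs_nonneg _) (fun i => ?_) hdct
  rw [← integral_scaled_mul (hεpos i)]
  exact (hφ.scaled (hεpos i)).integral_abs_convolution_sub_self_le hint

lemma MeasureTheory.Integrable.tendsto_integral_abs_scaled_convolution_sub [l.IsCountablyGenerated]
    {f : EuclideanSpace ℝ (Fin d) → ℝ} (hf : Integrable f) (hφ : IsProbabilityDensity volume φ)
    (hεpos : ∀ i, 0 < ε i) (hε0 : Tendsto ε l (𝓝 0)) :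
    Tendsto (fun i => ∫ x, |(scaled d φ (ε i) ⋆[mulL, volume] f) x - f x|) l (𝓝 0) := by
  refine tendsto_of_forall_approx fun δ hδ => ?_
  obtain ⟨h, hs, hfh, hh, hint⟩ := hf.exists_hasCompactSupport_integral_sub_le (half_pos hδ)
  refine ⟨_, 0, hs.tendsto_integral_abs_scaled_convolution_sub hh hφ hεpos hε0,
    by simp [hδ.le], fun i => ?_⟩
  rw [Real.dist_eq]
  refine ((hφ.scaled (hεpos i)).abs_sub_integral_abs_convolution_sub_self_le hf hint).trans ?_
  simp only [Real.norm_eq_abs] at hfh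
  linarith

end Mollifier

section DominatedMeasures

variable {α : Type*} [MeasurableSpace α] {μ : Measure α} {R : ℝ}

lemma abs_integral_sub_integral_le_of_le_smul {m : Measure α} (hR : 0 ≤ R)
    (hm : m ≤ ENNReal.ofReal R • μ) {u v : α → ℝ} (hu : Integrable u μ) (hv : Integrable v μ) :
    |∫ x, u x ∂m - ∫ x, v x ∂m| ≤ R * ∫ x, |u x - v x| ∂μ := by
  have hint {g : α → ℝ} (hg : Integrable g μ) : Integrable g m :=
    (hg.smul_measure ENNReal.ofReal_ne_top).mono_measure hm
  calc |∫ x, u x ∂m - ∫ x, v x ∂m| = |∫ x, (u x - v x) ∂m| := by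
        rw [integral_sub (hint hu) (hint hv)]
    _ ≤ ∫ x, |u x - v x| ∂m := abs_integral_le_integral_abs
    _ ≤ ∫ x, |u x - v x| ∂(ENNReal.ofReal R • μ) :=
        integral_mono_measure hm (ae_of_all _ fun x => abs_nonneg _)
          ((hu.sub hv).abs.smul_measure ENNReal.ofReal_ne_top)
    _ = R * ∫ x, |u x - v x| ∂μ := by
        rw [integral_smul_measure, ENNReal.toReal_ofReal hR, smul_eq_mul]

lemma tendsto_integral_sub_integral_of_le_smul {ι : Type*} {l : Filter ι} (hR : 0 ≤ R)
    {m : ι → Measure α} (hm : ∀ i, m i ≤ ENNReal.ofReal R • μ) {g : ι → α → ℝ} {f : α → ℝ}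
    (hg : ∀ i, Integrable (g i) μ) (hf : Integrable f μ)
    (hgf : Tendsto (fun i => ∫ x, |g i x - f x| ∂μ) l (𝓝 0)) :
    Tendsto (fun i => ∫ x, g i x ∂(m i) - ∫ x, f x ∂(m i)) l (𝓝 0) :=
  squeeze_zero_norm (fun i => abs_integral_sub_integral_le_of_le_smul hR (hm i) (hg i) hf)
    (by simpa using hgf.const_mul R)

end DominatedMeasures

lemma HasBddDensity.le_smul_volume {d : ℕ} {m : Measure (EuclideanSpace ℝ (Fin d))} {R : ℝ}
    (hm : HasBddDensity d m R) : m ≤ ENNReal.ofReal R • volume := by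
  obtain ⟨ρ, -, rfl, hρ⟩ := hm
  exact (withDensity_mono hρ).trans_eq (withDensity_const _)

lemma MeasureTheory.ProbabilityMeasure.le_smul_of_tendsto {Ω ι : Type*} [MeasurableSpace Ω]
    [TopologicalSpace Ω] [OpensMeasurableSpace Ω] [HasOuterApproxClosed Ω] {l : Filter ι}
    [l.NeBot] {P : ι → ProbabilityMeasure Ω} {Q : ProbabilityMeasure Ω}
    (hPQ : Tendsto P l (𝓝 Q)) {μ : Measure Ω} [μ.OuterRegular] {c : ℝ≥0∞} (hc : c ≠ ∞)
    (hle : ∀ i, (P i : Measure Ω) ≤ c • μ) :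
    (Q : Measure Ω) ≤ c • μ := by
  have := Measure.OuterRegular.smul μ hc
  refine Measure.le_iff'.2 fun s => ?_
  rw [s.measure_eq_iInf_isOpen (c • μ)]
  refine le_iInf₂ fun U hsU => le_iInf fun hU => (measure_mono hsU).trans ?_
  calc (Q : Measure Ω) U ≤ l.liminf fun i => (P i : Measure Ω) U :=
        ProbabilityMeasure.le_liminf_measure_open_of_tendsto hPQ hU
    _ ≤ (c • μ) U :=
        liminf_le_of_frequently_le' (Frequently.of_forall fun i => hle i U)

section WeakStar

variable {d : ℕ} {μ : ℕ → Measure (EuclideanSpace ℝ (Fin d))}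
  {ν : Measure (EuclideanSpace ℝ (Fin d))}

lemma WeakStarTendsto.tendsto_probabilityMeasure
    {P : ℕ → ProbabilityMeasure (EuclideanSpace ℝ (Fin d))}
    {Q : ProbabilityMeasure (EuclideanSpace ℝ (Fin d))}
    (hconv : WeakStarTendsto d (fun k => P k) Q) : Tendsto P atTop (𝓝 Q) :=
  ProbabilityMeasure.tendsto_iff_forall_integral_tendsto.2 fun g =>
    hconv g g.continuous ⟨‖g‖, fun x => by simpa using g.norm_coe_le_norm x⟩

lemma WeakStarTendsto.tendsto_integral_of_integrable (hconv : WeakStarTendsto d μ ν) {R : ℝ}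
    (hR : 0 < R) (hμR : ∀ k, μ k ≤ ENNReal.ofReal R • volume)
    (hνR : ν ≤ ENNReal.ofReal R • volume) {f : EuclideanSpace ℝ (Fin d) → ℝ}
    (hf : Integrable f) :
    Tendsto (fun k => ∫ x, f x ∂(μ k)) atTop (𝓝 (∫ x, f x ∂ν)) := by
  refine tendsto_of_forall_approx fun δ hδ => ?_
  obtain ⟨h, hs, hfh, hh, hint⟩ := hf.exists_hasCompactSupport_integral_sub_le (div_pos hδ hR)
  obtain ⟨C, hC⟩ := hh.bounded_above_of_compact_support hs
  have hRfh : R * ∫ x, |f x - h x| ≤ δ := by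
    simp only [Real.norm_eq_abs] at hfh
    rwa [le_div_iff₀' hR] at hfh
  refine ⟨_, _, hconv h hh ⟨C, fun x => by simpa using hC x⟩, ?_, fun k => ?_⟩
  · exact (abs_integral_sub_integral_le_of_le_smul hR.le hνR hf hint).trans hRfh
  · exact (abs_integral_sub_integral_le_of_le_smul hR.le (hμR k) hf hint).trans hRfh

end WeakStar

/-- The doubly mollified measures `φ_{ε_k} * μ_k * φ_{ε_k}` converge to `μ`
in the weak-* topology of `L^∞`: integrals of the doubly mollified `f` against `μ_k` converge
to `∫ f dμ` for every `f ∈ L¹(ℝ^d)`. -/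
theorem doubly_mollified_weak_star_Linfty_convergence
    (d : ℕ)
    (φ : EuclideanSpace ℝ (Fin d) → ℝ) (hφ : IsMollifier d φ)
    (R : ℝ) (hR : 0 < R)
    (ε : ℕ → ℝ) (hεpos : ∀ k, 0 < ε k) (hε0 : Tendsto ε atTop (𝓝 0))
    (μ : ℕ → Measure (EuclideanSpace ℝ (Fin d))) (hprob : ∀ k, IsProbabilityMeasure (μ k))
    (hbdd : ∀ k, HasBddDensity d (μ k) R)
    (ν : Measure (EuclideanSpace ℝ (Fin d))) (hν : IsProbabilityMeasure ν)
    (hconv : WeakStarTendsto d μ ν) :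
    ∀ f : EuclideanSpace ℝ (Fin d) → ℝ,
      Integrable f (volume : Measure (EuclideanSpace ℝ (Fin d))) →
      Tendsto
        (fun k => ∫ x,
          (∫ y, ∫ z, scaled d φ (ε k) y * f (x - y - z) * scaled d φ (ε k) z) ∂(μ k))
        atTop (𝓝 (∫ x, f x ∂ν)) := by
  intro f hf
  have hc (k : ℕ) : IsProbabilityDensity volume (scaled d φ (ε k)) :=
    hφ.isProbabilityDensity.scaled (hεpos k)
  have hμR (k : ℕ) := (hbdd k).le_smul_volume
  have hνR := ProbabilityMeasure.le_smul_of_tendsto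
    (hconv.tendsto_probabilityMeasure (P := fun k => ⟨μ k, hprob k⟩) (Q := ⟨ν, hν⟩))
    ENNReal.ofReal_ne_top hμR
  have hL1 : Tendsto (fun k => ∫ x, |(scaled d φ (ε k) ⋆[mulL, volume]
      (scaled d φ (ε k) ⋆[mulL, volume] f)) x - f x|) atTop (𝓝 0) :=
    squeeze_zero (fun k => integral_nonneg fun x => abs_nonneg _)
      (fun k => (hc k).integral_abs_convolution_convolution_sub_le hf)
      (by simpa using (hf.tendsto_integral_abs_scaled_convolution_sub
        hφ.isProbabilityDensity hεpos hε0).const_mul 2)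
  have hdiff := tendsto_integral_sub_integral_of_le_smul hR.le hμR
    (fun k => (hc k).integrable.integrable_convolution mulL
      ((hc k).integrable.integrable_convolution mulL hf)) hf hL1
  simp_rw [integral_integral_mul_mul_eq_convolution_convolution]
  simpa using hdiff.add (hconv.tendsto_integral_of_integrable hR hμR hνR hf)
end
end
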